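/- arXiv:1706.07973 — 2 statements merged into one kernel-verified Lean document; each statement's English description precedes it below -/
import Mathlib

section
/- Under the hypotheses of the previous statement, suppose additionally α > 1 and ε_{n+1} < ((α−1)/(α+1))·ε_n for all n. Then the sequence (h^u_{Φ_{ε_n}}(w₀, α·ε_n))_n is (weakly) decreasing. -/
open MeasureTheory

variable {X : Type*} [MetricSpace X] [CompactSpace X] [MeasurableSpace X] [BorelSpace X]

/-- `μ` is an `f`-invariant Borel probability measure. -/
def InvariantProb (f : X → X) (μ : ProbabilityMeasure X) : Prop :=
  (μ : Measure X).map f = (μ : Measure X)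

/-- The generalized rotation set of a potential `Φ : X → ℝ^m` with respect to `f`. -/
def Rot (f : X → X) {m : ℕ} (Φ : X → EuclideanSpace ℝ (Fin m)) :
    Set (EuclideanSpace ℝ (Fin m)) :=
  {w | ∃ μ : ProbabilityMeasure X, InvariantProb f μ ∧ (∫ x, Φ x ∂(μ : Measure X)) = w}

/-- The localized entropy `H(w) = sup { h_μ(f) : μ invariant, rv(μ) = w }`, where the
measure-theoretic entropy is given by the function `h`. -/
noncomputable def locEnt (f : X → X) (h : ProbabilityMeasure X → ℝ) {m : ℕ}
    (Φ : X → EuclideanSpace ℝ (Fin m)) (w : EuclideanSpace ℝ (Fin m)) : ℝ :=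
  sSup (h '' {μ | InvariantProb f μ ∧ (∫ x, Φ x ∂(μ : Measure X)) = w})

/-- The maximum local entropy of `Ψ` on the closed ball `B̄(w₀, r)`. -/
noncomputable def hu (f : X → X) (h : ProbabilityMeasure X → ℝ) {m : ℕ}
    (Ψ : X → EuclideanSpace ℝ (Fin m)) (w₀ : EuclideanSpace ℝ (Fin m)) (r : ℝ) : ℝ :=
  sSup (locEnt f h Ψ '' (Metric.closedBall w₀ r ∩ Rot f Ψ))

/-- The minimum local entropy of `Ψ` on the closed ball `B̄(w₀, r)`. -/
noncomputable def hl (f : X → X) (h : ProbabilityMeasure X → ℝ) {m : ℕ}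
    (Ψ : X → EuclideanSpace ℝ (Fin m)) (w₀ : EuclideanSpace ℝ (Fin m)) (r : ℝ) : ℝ :=
  sInf (locEnt f h Ψ '' (Metric.closedBall w₀ r ∩ Rot f Ψ))

/-!
Consecutive potentials satisfy `‖Φ_{ε_{n+1}} - Φ_{ε_n}‖_∞ < ε_{n+1} + ε_n`, so an invariant measure
whose `Φ_{ε_{n+1}}`-rotation vector lies in `B̄(w₀, α ε_{n+1})` has its `Φ_{ε_n}`-rotation vector in
`B̄(w₀, α ε_{n+1} + ε_{n+1} + ε_n)`, and the rate condition says exactly that this ball is contained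
in `B̄(w₀, α ε_n)`. Hence every entropy entering `h^u` at level `n + 1` is bounded by `h^u` at
level `n`. The ball at level `n + 1` is nonempty because it contains the `Φ_{ε_{n+1}}`-rotation
vector of a measure realizing `w₀`; without this the supremum over it would be the junk value `0`.
-/

theorem dist_integral_le_of_forall_dist_le {Ω E : Type*} [MeasurableSpace Ω]
    [NormedAddCommGroup E] [NormedSpace ℝ E] {μ : Measure Ω} [IsProbabilityMeasure μ]
    {g g' : Ω → E} (hg : Integrable g μ) (hg' : Integrable g' μ) {C : ℝ}
    (hC : ∀ x, dist (g x) (g' x) ≤ C) :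
    dist (∫ x, g x ∂μ) (∫ x, g' x ∂μ) ≤ C := by
  rw [dist_eq_norm, ← integral_sub hg hg']
  simpa using norm_integral_le_of_norm_le_const
    (μ := μ) (ae_of_all _ fun x => (dist_eq_norm (g x) (g' x)).symm ▸ hC x)

section LocalizedEntropy

variable {Y : Type*} [MeasurableSpace Y] {f : Y → Y} {h : ProbabilityMeasure Y → ℝ} {m : ℕ}
  {Ψ Ψ' : Y → EuclideanSpace ℝ (Fin m)} {w w₀ : EuclideanSpace ℝ (Fin m)} {r r' δ : ℝ}

theorem dist_integral_le_of_continuous [TopologicalSpace Y] [CompactSpace Y]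
    [OpensMeasurableSpace Y] (hΨ : Continuous Ψ) (hΨ' : Continuous Ψ')
    (hδ : ∀ x, dist (Ψ x) (Ψ' x) ≤ δ) (μ : ProbabilityMeasure Y) :
    dist (∫ x, Ψ x ∂(μ : Measure Y)) (∫ x, Ψ' x ∂(μ : Measure Y)) ≤ δ :=
  dist_integral_le_of_forall_dist_le
    (hΨ.integrable_of_hasCompactSupport (.of_compactSpace _))
    (hΨ'.integrable_of_hasCompactSupport (.of_compactSpace _)) hδ

theorem le_locEnt (hbdd : BddAbove (Set.range h)) {μ : ProbabilityMeasure Y}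
    (hμ : InvariantProb f μ) : h μ ≤ locEnt f h Ψ (∫ x, Ψ x ∂(μ : Measure Y)) :=
  le_csSup (hbdd.mono (Set.image_subset_range _ _)) ⟨μ, ⟨hμ, rfl⟩, rfl⟩

theorem locEnt_le {M : ℝ} (hw : w ∈ Rot f Ψ) (hM : ∀ μ, h μ ≤ M) : locEnt f h Ψ w ≤ M := by
  obtain ⟨μ, hμ⟩ := hw
  exact csSup_le ⟨h μ, μ, hμ, rfl⟩ (by rintro _ ⟨ν, -, rfl⟩; exact hM ν)

theorem le_hu (hbdd : BddAbove (Set.range h)) (hw : w ∈ Metric.closedBall w₀ r ∩ Rot f Ψ) :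
    locEnt f h Ψ w ≤ hu f h Ψ w₀ r := by
  obtain ⟨M, hM⟩ := hbdd
  refine le_csSup ⟨M, ?_⟩ ⟨w, hw, rfl⟩
  rintro _ ⟨v, hv, rfl⟩
  exact locEnt_le hv.2 fun μ => hM ⟨μ, rfl⟩

theorem closedBall_inter_rot_nonempty [TopologicalSpace Y] [CompactSpace Y]
    [OpensMeasurableSpace Y] (hΨ : Continuous Ψ) (hΨ' : Continuous Ψ')
    (hw₀ : w₀ ∈ Rot f Ψ) (hδ : ∀ x, dist (Ψ x) (Ψ' x) ≤ r) :
    (Metric.closedBall w₀ r ∩ Rot f Ψ').Nonempty := by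
  obtain ⟨μ, hμ, rfl⟩ := hw₀
  refine ⟨_, ?_, μ, hμ, rfl⟩
  rw [Metric.mem_closedBall, dist_comm]
  exact dist_integral_le_of_continuous hΨ hΨ' hδ μ

theorem hu_le_hu_of_dist_le [TopologicalSpace Y] [CompactSpace Y] [OpensMeasurableSpace Y]
    (hbdd : BddAbove (Set.range h)) (hΨ : Continuous Ψ)
    (hΨ' : Continuous Ψ') (hδ : ∀ x, dist (Ψ x) (Ψ' x) ≤ δ)
    (hne : (Metric.closedBall w₀ r ∩ Rot f Ψ).Nonempty) (hr : r + δ ≤ r') :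
    hu f h Ψ w₀ r ≤ hu f h Ψ' w₀ r' := by
  refine csSup_le (hne.image _) ?_
  rintro _ ⟨w, ⟨hwr, μ₀, hμ₀⟩, rfl⟩
  refine csSup_le ⟨h μ₀, μ₀, hμ₀, rfl⟩ ?_
  rintro _ ⟨μ, ⟨hμ, rfl⟩, rfl⟩
  have hmem : ∫ x, Ψ' x ∂(μ : Measure Y) ∈ Metric.closedBall w₀ r' := by
    rw [Metric.mem_closedBall]
    calc dist (∫ x, Ψ' x ∂(μ : Measure Y)) w₀
        ≤ dist (∫ x, Ψ' x ∂(μ : Measure Y)) (∫ x, Ψ x ∂(μ : Measure Y))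
          + dist (∫ x, Ψ x ∂(μ : Measure Y)) w₀ := dist_triangle _ _ _
      _ ≤ δ + r := by
        rw [dist_comm]
        exact add_le_add (dist_integral_le_of_continuous hΨ hΨ' hδ μ) hwr
      _ ≤ r' := by linarith
  exact (le_locEnt hbdd hμ).trans (le_hu hbdd ⟨hmem, μ, hμ, rfl⟩)

end LocalizedEntropy

theorem stmt8_general (m : ℕ) (f : X → X)
    (h : ProbabilityMeasure X → ℝ)
    (hbdd : BddAbove (Set.range h))
    (Φ : X → EuclideanSpace ℝ (Fin m)) (hΦ : Continuous Φ)
    (ε : ℕ → ℝ) (hεpos : ∀ n, 0 < ε n)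
    (Φseq : ℕ → X → EuclideanSpace ℝ (Fin m)) (hΦseqc : ∀ n, Continuous (Φseq n))
    (happrox : ∀ n x, ‖Φ x - Φseq n x‖ < ε n)
    (w₀ : EuclideanSpace ℝ (Fin m)) (hw₀ : w₀ ∈ Rot f Φ)
    (α : ℝ) (hα : 1 < α) (hεrate : ∀ n, ε (n + 1) < (α - 1) / (α + 1) * ε n) :
    Antitone (fun n => hu f h (Φseq n) w₀ (α * ε n)) := by
  have hclose : ∀ n x, dist (Φ x) (Φseq n x) ≤ ε n := fun n x =>
    (dist_eq_norm (Φ x) _).trans_le (happrox n x).le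
  refine antitone_nat_of_succ_le fun n => hu_le_hu_of_dist_le (δ := ε (n + 1) + ε n) hbdd
    (hΦseqc _) (hΦseqc _) (fun x => ?_) ?_ ?_
  · exact (dist_triangle_left _ _ (Φ x)).trans (add_le_add (hclose _ x) (hclose n x))
  · refine closedBall_inter_rot_nonempty hΦ (hΦseqc _) hw₀ fun x => (hclose _ x).trans ?_
    exact le_mul_of_one_le_left (hεpos _).le hα.le
  · have hrate := hεrate n
    rw [div_mul_eq_mul_div, lt_div_iff₀ (by linarith)] at hrate
    linarith

/-- If additionally `α > 1` and `ε_{n+1} < ((α−1)/(α+1)) ε_n` for all `n`, then the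
sequence `(h^u_{Φ_{ε_n}}(w₀, α ε_n))_n` is (weakly) decreasing. -/
theorem stmt8 (m : ℕ) (f : X → X) (hf : Continuous f)
    (h : ProbabilityMeasure X → ℝ)
    (husc : UpperSemicontinuousOn h {μ | InvariantProb f μ})
    (hbdd : BddAbove (Set.range h))
    (Φ : X → EuclideanSpace ℝ (Fin m)) (hΦ : Continuous Φ)
    (ε : ℕ → ℝ) (hεpos : ∀ n, 0 < ε n) (hεto : Filter.Tendsto ε Filter.atTop (nhds 0))
    (Φseq : ℕ → X → EuclideanSpace ℝ (Fin m)) (hΦseqc : ∀ n, Continuous (Φseq n))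
    (happrox : ∀ n x, ‖Φ x - Φseq n x‖ < ε n)
    (w₀ : EuclideanSpace ℝ (Fin m)) (hw₀ : w₀ ∈ Rot f Φ)
    (α : ℝ) (hα : 1 < α) (hεrate : ∀ n, ε (n + 1) < (α - 1) / (α + 1) * ε n) :
    Antitone (fun n => hu f h (Φseq n) w₀ (α * ε n)) :=
  stmt8_general m f h hbdd Φ hΦ ε hεpos Φseq hΦseqc happrox w₀ hw₀ α hα hεrate
end

section
/- Let f : X → X be continuous on a compact metric space with μ ↦ h_μ(f) upper semi-continuous. Then the global entropy function (Φ, w) ↦ H_Φ(w) is continuous on the set ⋃_{Φ ∈ C(X,ℝ^m)} {Φ} × int Rot(Φ), where C(X,ℝ^m) × ℝ^m carries the metric given by the sum of the supremum norm distance and the Euclidean distance. -/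
/-!
Mixing invariant measures is affine on rotation vectors and, by hypothesis, on entropy, so the set
of pairs `(w, c)` with `c ≤ h μ` for some invariant `μ` of rotation vector `w` is convex: the
localized entropy is concave. Around an interior point `w₀` of `Rot Φ₀` pick invariant measures
whose rotation vectors are the vertices of a simplex containing a ball around `w₀`; for `Φ` close to
`Φ₀` the perturbed simplex still contains a smaller ball, so every point `u` of it is realized with
entropy at least the least vertex entropy `C`. Mixing a measure with weight `t` of such a measure
moves its rotation vector anywhere within distance `≈ t` at an entropy cost of at most
`t (sup h - C)`. Applied to a near-optimal measure for `(Φ₀, w₀)` this gives lower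
semicontinuity, and applied to an arbitrary measure of the fibre over a nearby `(Φ, w)` it gives
upper semicontinuity.
-/

open MeasureTheory

variable {X : Type*} [MetricSpace X] [CompactSpace X] [MeasurableSpace X] [BorelSpace X]

open Metric Set Filter Topology

def MixtureAffine (h : ProbabilityMeasure X → ℝ) : Prop :=
  ∀ (μ ν ρ : ProbabilityMeasure X) (t : ℝ), 0 ≤ t → t ≤ 1 →
    (ρ : Measure X) = (ENNReal.ofReal t) • (μ : Measure X)
        + (ENNReal.ofReal (1 - t)) • (ν : Measure X) →
    h ρ = t * h μ + (1 - t) * h ν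

section Hypograph

variable {E : Type*} [NormedAddCommGroup E] [NormedSpace ℝ E]

omit [CompactSpace X] in
lemma exists_invariantProb_mix {f : X → X} (hf : Continuous f) {μ ν : ProbabilityMeasure X}
    (hμ : InvariantProb f μ) (hν : InvariantProb f ν) {t : ℝ} (ht₀ : 0 ≤ t) (ht₁ : t ≤ 1) :
    ∃ ρ : ProbabilityMeasure X, InvariantProb f ρ ∧
      (ρ : Measure X) = ENNReal.ofReal t • (μ : Measure X)
        + ENNReal.ofReal (1 - t) • (ν : Measure X) := by
  let κ : Measure X :=
    ENNReal.ofReal t • (μ : Measure X) + ENNReal.ofReal (1 - t) • (ν : Measure X)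
  have : IsProbabilityMeasure κ :=
    ⟨by simp [κ, ← ENNReal.ofReal_add ht₀ (sub_nonneg.2 ht₁)]⟩
  refine ⟨⟨κ, this⟩, ?_, rfl⟩
  change κ.map f = κ
  rw [Measure.map_add _ _ hf.measurable, Measure.map_smul, Measure.map_smul, hμ, hν]

lemma integral_eq_of_eq_mix {g : X → E} (hg : Continuous g) {μ ν ρ : ProbabilityMeasure X}
    {t : ℝ} (ht₀ : 0 ≤ t) (ht₁ : t ≤ 1)
    (hρ : (ρ : Measure X) = ENNReal.ofReal t • (μ : Measure X)
        + ENNReal.ofReal (1 - t) • (ν : Measure X)) :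
    ∫ x, g x ∂(ρ : Measure X)
      = t • ∫ x, g x ∂(μ : Measure X) + (1 - t) • ∫ x, g x ∂(ν : Measure X) := by
  have hint : ∀ κ : Measure X, [IsFiniteMeasure κ] → Integrable g κ := fun κ _ =>
    hg.integrable_of_hasCompactSupport (HasCompactSupport.of_compactSpace g)
  rw [hρ, integral_add_measure ((hint _).smul_measure ENNReal.ofReal_ne_top)
      ((hint _).smul_measure ENNReal.ofReal_ne_top), integral_smul_measure,
    integral_smul_measure, ENNReal.toReal_ofReal ht₀, ENNReal.toReal_ofReal (sub_nonneg.2 ht₁)]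

lemma dist_integral_le_dist (Φ Ψ : C(X, E)) (μ : ProbabilityMeasure X) :
    dist (∫ x, Φ x ∂(μ : Measure X)) (∫ x, Ψ x ∂(μ : Measure X)) ≤ dist Φ Ψ := by
  have hint : ∀ g : C(X, E), Integrable g (μ : Measure X) := fun g =>
    g.continuous.integrable_of_hasCompactSupport (HasCompactSupport.of_compactSpace g)
  rw [dist_eq_norm, ← integral_sub (hint Φ) (hint Ψ)]
  simpa using norm_integral_le_of_norm_le_const (μ := (μ : Measure X))
    (Eventually.of_forall fun x => (dist_eq_norm (Φ x) (Ψ x)).symm.trans_le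
      (ContinuousMap.dist_apply_le_dist x))

/-- The hypograph of `w ↦ locEnt f h Φ w`, except that on the boundary level `locEnt f h Φ w`
belongs to it only when the supremum is attained. -/
def entropyHypograph (f : X → X) (h : ProbabilityMeasure X → ℝ) (Φ : X → E) : Set (E × ℝ) :=
  {q | ∃ μ : ProbabilityMeasure X, InvariantProb f μ ∧ ∫ x, Φ x ∂(μ : Measure X) = q.1 ∧
    q.2 ≤ h μ}

lemma convex_entropyHypograph {f : X → X} (hf : Continuous f) {h : ProbabilityMeasure X → ℝ}
    (haff : MixtureAffine h) {Φ : X → E} (hΦ : Continuous Φ) :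
    Convex ℝ (entropyHypograph f h Φ) := by
  rintro ⟨x, c⟩ ⟨μ, hμ, hμx, hμc⟩ ⟨y, d⟩ ⟨ν, hν, hνy, hνd⟩ a b ha hb hab
  obtain rfl : b = 1 - a := by linarith
  obtain ⟨ρ, hρ, hρmix⟩ := exists_invariantProb_mix hf hμ hν ha (by linarith : a ≤ 1)
  refine ⟨ρ, hρ, ?_, ?_⟩
  · simp [integral_eq_of_eq_mix hΦ ha (by linarith) hρmix, hμx, hνy]
  · rw [haff μ ν ρ a ha (by linarith) hρmix]
    simp only [Prod.smul_mk, Prod.mk_add_mk, smul_eq_mul]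
    gcongr

omit [MetricSpace X] [CompactSpace X] [BorelSpace X] in
lemma le_locEnt_of_mem_entropyHypograph {f : X → X} {h : ProbabilityMeasure X → ℝ}
    (hbdd : BddAbove (range h)) {m : ℕ} {Φ : X → EuclideanSpace ℝ (Fin m)}
    {q : EuclideanSpace ℝ (Fin m) × ℝ} (hq : q ∈ entropyHypograph f h Φ) :
    q.2 ≤ locEnt f h Φ q.1 := by
  obtain ⟨μ, hμ, hμq, hq⟩ := hq
  exact hq.trans (le_csSup (hbdd.mono (image_subset_range _ _)) ⟨μ, ⟨hμ, hμq⟩, rfl⟩)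

end Hypograph

lemma closedBall_subset_convexHull_of_norm_sub_le {E : Type*} [NormedAddCommGroup E]
    [InnerProductSpace ℝ E] {ι : Type*} [Finite ι] [Nonempty ι] {v v' : ι → E} {w₀ : E} {r : ℝ}
    (hv : closedBall w₀ (2 * r) ⊆ convexHull ℝ (range v)) (hvv' : ∀ i, ‖v i - v' i‖ ≤ r) :
    closedBall w₀ r ⊆ convexHull ℝ (range v') := by
  intro u hu
  have hK : Convex ℝ (convexHull ℝ (range v')) := convex_convexHull ℝ _
  obtain ⟨p, hpK, hp⟩ := exists_norm_eq_iInf_of_complete_convex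
    ((range_nonempty v').mono (subset_convexHull ℝ _))
    ((finite_range v').isCompact_convexHull (𝕜 := ℝ)).isComplete hK u
  have hproj := (norm_eq_iInf_iff_real_inner_le_zero hK hpK).1 hp
  by_contra huK
  have hpos : 0 < ‖u - p‖ := norm_pos_iff.2 (sub_ne_zero.2 fun h => huK (h ▸ hpK))
  set y := ‖u - p‖⁻¹ • (u - p)
  have hy : ‖y‖ = 1 := by simp [y, norm_smul, hpos.ne']
  have hr : 0 ≤ r := dist_nonneg.trans hu
  have hz : u + r • y ∈ convexHull ℝ (range v) := hv <| by
    rw [mem_closedBall]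
    calc dist (u + r • y) w₀ ≤ dist (u + r • y) u + dist u w₀ := dist_triangle _ _ _
      _ ≤ r + r := by
        gcongr
        · simp [norm_smul, hy, abs_of_nonneg hr]
        · exact hu
      _ = 2 * r := by ring
  -- the support function of `convexHull (range v)` in direction `y` is attained at a vertex
  obtain ⟨_, ⟨i, rfl⟩, hi⟩ :=
    ((innerSL ℝ y).toLinearMap.convexOn convex_univ).exists_ge_of_mem_convexHull (subset_univ _) hz
  simp only [ContinuousLinearMap.coe_coe, innerSL_apply_apply, inner_add_right,
    real_inner_smul_right, real_inner_self_eq_norm_sq, hy] at hi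
  have hvertex : inner ℝ y (v i - v' i) ≤ r :=
    (real_inner_le_norm _ _).trans (by rw [hy, one_mul]; exact hvv' i)
  have hsep : inner ℝ y (v' i - p) ≤ 0 := by
    simpa [y, real_inner_smul_left] using mul_nonpos_of_nonneg_of_nonpos (inv_nonneg.2 hpos.le)
      (hproj _ (subset_convexHull ℝ _ ⟨i, rfl⟩))
  have hup : inner ℝ y (u - p) = ‖u - p‖ := by
    rw [real_inner_smul_left, real_inner_self_eq_norm_sq]
    field_simp
  rw [inner_sub_right] at hvertex hsep hup
  linarith

lemma Convex.mk_mem_of_near_center {F : Type*} [NormedAddCommGroup F] [NormedSpace ℝ F]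
    {S : Set (F × ℝ)} (hS : Convex ℝ S) {w₀ : F} {R C : ℝ}
    (hC : ∀ u ∈ closedBall w₀ R, (u, C) ∈ S) {t : ℝ} (ht₀ : 0 < t) (ht₁ : t ≤ 1) {x w : F}
    (hx : dist x w₀ ≤ t * R / 3) (hw : dist w w₀ ≤ t * R / 3) {c : ℝ} (hxc : (x, c) ∈ S) :
    (w, t * C + (1 - t) * c) ∈ S := by
  set u := x + t⁻¹ • (w - x)
  have hR : 0 ≤ R := by nlinarith [dist_nonneg.trans hx]
  have hu : u ∈ closedBall w₀ R := by
    rw [mem_closedBall, dist_eq_norm] at *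
    calc ‖u - w₀‖ = ‖(x - w₀) + t⁻¹ • ((w - w₀) - (x - w₀))‖ := by congr 1; module
      _ ≤ ‖x - w₀‖ + t⁻¹ * (‖w - w₀‖ + ‖x - w₀‖) := by
        refine (norm_add_le _ _).trans ?_
        rw [norm_smul, Real.norm_of_nonneg (inv_nonneg.2 ht₀.le)]
        gcongr
        exact norm_sub_le _ _
      _ ≤ t * R / 3 + t⁻¹ * (t * R / 3 + t * R / 3) := by gcongr
      _ = t * R / 3 + 2 * R / 3 := by field_simp; ring
      _ ≤ R := by nlinarith
  convert hS (hC u hu) hxc ht₀.le (sub_nonneg.2 ht₁) (add_sub_cancel t 1) using 1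
  refine Prod.ext ?_ (by simp)
  simp only [u, Prod.smul_mk, Prod.mk_add_mk, smul_add, smul_smul, mul_inv_cancel₀ ht₀.ne']
  module

lemma exists_uniform_mem_entropyHypograph {f : X → X} (hf : Continuous f)
    {h : ProbabilityMeasure X → ℝ} (haff : MixtureAffine h) {m : ℕ}
    {Φ₀ : C(X, EuclideanSpace ℝ (Fin m))} {w₀ : EuclideanSpace ℝ (Fin m)}
    (hw₀ : w₀ ∈ interior (Rot f Φ₀)) :
    ∃ R > 0, ∃ C : ℝ, ∀ Φ : C(X, EuclideanSpace ℝ (Fin m)), dist Φ Φ₀ ≤ R →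
      ∀ u ∈ closedBall w₀ R, (u, C) ∈ entropyHypograph f h Φ := by
  obtain ⟨b, hb, hbRot⟩ :=
    exists_mem_interior_convexHull_affineBasis (mem_interior_iff_mem_nhds.1 hw₀)
  obtain ⟨r, hr, hball⟩ := nhds_basis_closedBall.mem_iff.1 (mem_interior_iff_mem_nhds.1 hb)
  choose ρ hρ hρb using fun i => hbRot (subset_convexHull ℝ _ ⟨i, rfl⟩)
  set C := Finset.univ.inf' Finset.univ_nonempty (h ∘ ρ)
  refine ⟨r / 2, half_pos hr, C, fun Φ hΦ u hu => ?_⟩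
  have hslice : Convex ℝ {w | (w, C) ∈ entropyHypograph f h Φ} :=
    (convex_entropyHypograph hf haff Φ.continuous).affine_preimage
      ((AffineMap.id ℝ _).prod (AffineMap.const ℝ _ C))
  have hvert : ∀ i, (∫ x, Φ x ∂(ρ i : Measure X), C) ∈ entropyHypograph f h Φ :=
    fun i => ⟨ρ i, hρ i, rfl, Finset.inf'_le _ (Finset.mem_univ i)⟩
  refine hslice.convexHull_subset_iff.2 (range_subset_iff.2 hvert) ?_
  refine closedBall_subset_convexHull_of_norm_sub_le (v := b) ?_ (fun i => ?_) hu
  · rwa [mul_div_cancel₀ _ two_ne_zero]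
  · rw [← hρb i, ← dist_eq_norm, dist_comm]
    exact (dist_integral_le_dist Φ Φ₀ (ρ i)).trans hΦ

lemma exists_mem_Ioc_mul_lt (K : ℝ) {ε : ℝ} (hε : 0 < ε) : ∃ t ∈ Ioc (0 : ℝ) 1, t * K < ε := by
  have hsmall : ∀ᶠ t in 𝓝[>] (0 : ℝ), t * K < ε :=
    nhdsWithin_le_nhds <| (continuous_id.mul continuous_const).tendsto' 0 0 (zero_mul K)
      |>.eventually (gt_mem_nhds hε)
  exact (Filter.Eventually.and (Ioc_mem_nhdsGT one_pos) hsmall).exists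

section Continuity

variable {f : X → X} {h : ProbabilityMeasure X → ℝ} {m : ℕ}

omit [MetricSpace X] [CompactSpace X] [BorelSpace X] in
lemma exists_lt_of_lt_locEnt {Φ : X → EuclideanSpace ℝ (Fin m)} {w : EuclideanSpace ℝ (Fin m)}
    {a c : ℝ} (hc : (w, c) ∈ entropyHypograph f h Φ) (ha : a < locEnt f h Φ w) :
    ∃ μ, InvariantProb f μ ∧ ∫ x, Φ x ∂(μ : Measure X) = w ∧ a < h μ := by
  obtain ⟨ν, hν, hνw, -⟩ := hc
  have hne : (h '' {μ | InvariantProb f μ ∧ ∫ x, Φ x ∂(μ : Measure X) = w}).Nonempty :=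
    ⟨h ν, ν, ⟨hν, hνw⟩, rfl⟩
  obtain ⟨_, ⟨μ, ⟨hμ, hμw⟩, rfl⟩, haμ⟩ := exists_lt_of_lt_csSup hne ha
  exact ⟨μ, hμ, hμw, haμ⟩

omit [MetricSpace X] [CompactSpace X] [BorelSpace X] in
lemma locEnt_le_s10 {Φ : X → EuclideanSpace ℝ (Fin m)} {w : EuclideanSpace ℝ (Fin m)} {b c : ℝ}
    (hc : (w, c) ∈ entropyHypograph f h Φ)
    (hb : ∀ μ, InvariantProb f μ → ∫ x, Φ x ∂(μ : Measure X) = w → h μ ≤ b) :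
    locEnt f h Φ w ≤ b := by
  obtain ⟨ν, hν, hνw, -⟩ := hc
  exact csSup_le ⟨h ν, ν, ⟨hν, hνw⟩, rfl⟩ fun _ ⟨μ, ⟨hμ, hμw⟩, hy⟩ => hy ▸ hb μ hμ hμw

variable {p₀ : C(X, EuclideanSpace ℝ (Fin m)) × EuclideanSpace ℝ (Fin m)} {R C M : ℝ}

lemma eventually_lt_locEnt (hf : Continuous f) (haff : MixtureAffine h) (hM : ∀ μ, h μ ≤ M)
    (hR : 0 < R)
    (hC : ∀ Φ : C(X, EuclideanSpace ℝ (Fin m)), dist Φ p₀.1 ≤ R →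
      ∀ u ∈ closedBall p₀.2 R, (u, C) ∈ entropyHypograph f h Φ)
    {a : ℝ} (ha : a < locEnt f h p₀.1 p₀.2) :
    ∀ᶠ p in 𝓝 p₀, a < locEnt f h p.1 p.2 := by
  obtain ⟨μ, hμ, hμw, haμ⟩ :=
    exists_lt_of_lt_locEnt (hC p₀.1 (by simp [hR.le]) p₀.2 (mem_closedBall_self hR.le)) ha
  obtain ⟨t, ⟨ht₀, ht₁⟩, htK⟩ := exists_mem_Ioc_mul_lt (M - C) (sub_pos.2 haμ)
  filter_upwards [closedBall_mem_nhds p₀ (by positivity : 0 < t * R / 3)] with p hp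
  rw [mem_closedBall, Prod.dist_eq, max_le_iff] at hp
  obtain ⟨hΦ, hw⟩ := hp
  have hx : dist (∫ x, p.1 x ∂(μ : Measure X)) p₀.2 ≤ t * R / 3 :=
    hμw ▸ (dist_integral_le_dist p.1 p₀.1 μ).trans hΦ
  have hmix := (convex_entropyHypograph hf haff p.1.continuous).mk_mem_of_near_center
    (hC p.1 (hΦ.trans (by nlinarith))) ht₀ ht₁ hx hw ⟨μ, hμ, rfl, le_rfl⟩
  calc a < h μ - t * (M - C) := by linarith
    _ ≤ t * C + (1 - t) * h μ := by nlinarith [hM μ]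
    _ ≤ locEnt f h p.1 p.2 := le_locEnt_of_mem_entropyHypograph ⟨M, forall_mem_range.2 hM⟩ hmix

lemma eventually_locEnt_lt (hf : Continuous f) (haff : MixtureAffine h) (hM : ∀ μ, h μ ≤ M)
    (hR : 0 < R)
    (hC : ∀ Φ : C(X, EuclideanSpace ℝ (Fin m)), dist Φ p₀.1 ≤ R →
      ∀ u ∈ closedBall p₀.2 R, (u, C) ∈ entropyHypograph f h Φ)
    {a : ℝ} (ha : locEnt f h p₀.1 p₀.2 < a) :
    ∀ᶠ p in 𝓝 p₀, locEnt f h p.1 p.2 < a := by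
  obtain ⟨t, ⟨ht₀, ht₁⟩, htK⟩ := exists_mem_Ioc_mul_lt (M - C) (sub_pos.2 ha)
  filter_upwards [closedBall_mem_nhds p₀ (by positivity : 0 < t * R / 6)] with p hp
  rw [mem_closedBall, Prod.dist_eq, max_le_iff] at hp
  obtain ⟨hΦ, hw⟩ := hp
  refine (locEnt_le_s10 (hC p.1 (hΦ.trans (by nlinarith)) p.2 (hw.trans (by nlinarith)))
    fun μ hμ hμw => ?_).trans_lt (b := locEnt f h p₀.1 p₀.2 + t * (M - C)) (by linarith)
  have hx : dist (∫ x, p₀.1 x ∂(μ : Measure X)) p₀.2 ≤ t * R / 3 := by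
    calc _ ≤ dist (∫ x, p₀.1 x ∂(μ : Measure X)) p.2 + dist p.2 p₀.2 := dist_triangle _ _ _
      _ ≤ t * R / 6 + t * R / 6 := by
        gcongr
        rw [← hμw, dist_comm]
        exact (dist_integral_le_dist p.1 p₀.1 μ).trans hΦ
      _ = t * R / 3 := by ring
  have hmix := (convex_entropyHypograph hf haff p₀.1.continuous).mk_mem_of_near_center
    (hC p₀.1 (by simp [hR.le])) ht₀ ht₁ hx (by rw [dist_self]; positivity) ⟨μ, hμ, rfl, le_rfl⟩
  nlinarith [hM μ, le_locEnt_of_mem_entropyHypograph ⟨M, forall_mem_range.2 hM⟩ hmix]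

theorem continuousAt_locEnt (hf : Continuous f) (hbdd : BddAbove (range h))
    (haff : MixtureAffine h) (hp₀ : p₀.2 ∈ interior (Rot f p₀.1)) :
    ContinuousAt (fun p : C(X, EuclideanSpace ℝ (Fin m)) × EuclideanSpace ℝ (Fin m) =>
      locEnt f h p.1 p.2) p₀ := by
  obtain ⟨M, hM⟩ := hbdd
  obtain ⟨R, hR, C, hC⟩ := exists_uniform_mem_entropyHypograph hf haff hp₀
  have hM' : ∀ μ, h μ ≤ M := forall_mem_range.1 hM
  exact tendsto_order.2 ⟨fun a ha => eventually_lt_locEnt hf haff hM' hR hC ha,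
    fun a ha => eventually_locEnt_lt hf haff hM' hR hC ha⟩

end Continuity

theorem stmt10_general (m : ℕ) (f : X → X) (hf : Continuous f)
    (h : ProbabilityMeasure X → ℝ)
    (hbdd : BddAbove (Set.range h))
    (haff : ∀ (μ ν ρ : ProbabilityMeasure X) (t : ℝ), 0 ≤ t → t ≤ 1 →
      (ρ : Measure X) = (ENNReal.ofReal t) • (μ : Measure X)
          + (ENNReal.ofReal (1 - t)) • (ν : Measure X) →
      h ρ = t * h μ + (1 - t) * h ν) :
    ContinuousOn
      (fun p : C(X, EuclideanSpace ℝ (Fin m)) × EuclideanSpace ℝ (Fin m) =>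
        locEnt f h (⇑p.1) p.2)
      {p : C(X, EuclideanSpace ℝ (Fin m)) × EuclideanSpace ℝ (Fin m) |
        p.2 ∈ interior (Rot f (⇑p.1))} :=
  fun _ hp => (continuousAt_locEnt hf hbdd haff hp).continuousWithinAt

/-- Theorem B: if the entropy map `μ ↦ h_μ(f)` is upper semi-continuous (and affine, with
finite topological entropy), then the global entropy function `(Φ, w) ↦ H_Φ(w)` is
continuous on `⋃_Φ {Φ} × int Rot(Φ) ⊆ C(X, ℝ^m) × ℝ^m`. -/
theorem stmt10 (m : ℕ) (f : X → X) (hf : Continuous f)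
    (h : ProbabilityMeasure X → ℝ)
    (husc : UpperSemicontinuousOn h {μ | InvariantProb f μ})
    (hbdd : BddAbove (Set.range h))
    (haff : ∀ (μ ν ρ : ProbabilityMeasure X) (t : ℝ), 0 ≤ t → t ≤ 1 →
      (ρ : Measure X) = (ENNReal.ofReal t) • (μ : Measure X)
          + (ENNReal.ofReal (1 - t)) • (ν : Measure X) →
      h ρ = t * h μ + (1 - t) * h ν) :
    ContinuousOn
      (fun p : C(X, EuclideanSpace ℝ (Fin m)) × EuclideanSpace ℝ (Fin m) =>
        locEnt f h (⇑p.1) p.2)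
      {p : C(X, EuclideanSpace ℝ (Fin m)) × EuclideanSpace ℝ (Fin m) |
        p.2 ∈ interior (Rot f (⇑p.1))} :=
  stmt10_general m f hf h hbdd haff
end
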